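/- arXiv:1207.6592 — 5 statements merged into one kernel-verified Lean document; each statement's English description precedes it below -/
import Mathlib

section
/- Suppose a, b, c : (0, t₀) → ℝ are differentiable, positive, and satisfy the system ȧ = -(b² + c² - a²)/(2bc), ḃ = -(a² + c² - b²)/(2ac), ċ = -(a² + b² - c²)/(2ab) + 6ab. Then the function R = a/b satisfies c · (d/dt)(a/b) = (a/b)² - 1. -/
open Set

lemma ke_quotient_rule_eq {a b c : ℝ} (ha : a ≠ 0) (hb : b ≠ 0) (hc : c ≠ 0) :
    (-(b ^ 2 + c ^ 2 - a ^ 2) / (2 * b * c) * b - a * (-(a ^ 2 + c ^ 2 - b ^ 2) / (2 * a * c)))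
        / b ^ 2 = ((a / b) ^ 2 - 1) / c := by
  field_simp
  ring

theorem stmt6_general (t₀ : ℝ) (a b c : ℝ → ℝ)
    (hpos : ∀ t ∈ Ioo 0 t₀, 0 < a t ∧ 0 < b t ∧ 0 < c t)
    (ha : ∀ t ∈ Ioo 0 t₀,
      HasDerivAt a (-(b t ^ 2 + c t ^ 2 - a t ^ 2) / (2 * b t * c t)) t)
    (hb : ∀ t ∈ Ioo 0 t₀,
      HasDerivAt b (-(a t ^ 2 + c t ^ 2 - b t ^ 2) / (2 * a t * c t)) t) :
    ∀ t ∈ Ioo 0 t₀,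
      HasDerivAt (fun s => a s / b s) (((a t / b t) ^ 2 - 1) / c t) t := by
  intro t ht
  obtain ⟨hat, hbt, hct⟩ := hpos t ht
  rw [← ke_quotient_rule_eq hat.ne' hbt.ne' hct.ne']
  exact (ha t ht).div (hb t ht) hbt.ne'

/-- If a, b, c solve the KE system on (0, t₀), then R = a/b satisfies
c · (a/b)' = (a/b)² - 1. -/
theorem stmt6 (t₀ : ℝ) (a b c : ℝ → ℝ)
    (hpos : ∀ t ∈ Ioo 0 t₀, 0 < a t ∧ 0 < b t ∧ 0 < c t)
    (ha : ∀ t ∈ Ioo 0 t₀,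
      HasDerivAt a (-(b t ^ 2 + c t ^ 2 - a t ^ 2) / (2 * b t * c t)) t)
    (hb : ∀ t ∈ Ioo 0 t₀,
      HasDerivAt b (-(a t ^ 2 + c t ^ 2 - b t ^ 2) / (2 * a t * c t)) t)
    (hc : ∀ t ∈ Ioo 0 t₀,
      HasDerivAt c (-(a t ^ 2 + b t ^ 2 - c t ^ 2) / (2 * a t * b t) + 6 * a t * b t) t) :
    ∀ t ∈ Ioo 0 t₀,
      HasDerivAt (fun s => a s / b s) (((a t / b t) ^ 2 - 1) / c t) t :=
  stmt6_general t₀ a b c hpos ha hb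
end

section
/- The function f(r) = -(1/3)·tanh(r) satisfies (f·f')'/(f·f') = 12f + 2coth(2r) for all r < 0, with f(0) = 0, f'(0) = -1/3, and f(r) → 1/3 as r → -∞. -/
/-! `f f' = sinh r / (9 cosh³ r)`, whose logarithmic derivative is `coth r - 3 tanh r`; this equals
`12 f + 2 coth 2r = -4 tanh r + 2 coth 2r` because `coth 2r = (coth r + tanh r) / 2`. -/

open Filter Real Topology

theorem Real.hasDerivAt_tanh (x : ℝ) : HasDerivAt tanh (cosh x ^ 2)⁻¹ x := by
  have hquot := (hasDerivAt_sinh x).fun_div (hasDerivAt_cosh x) (cosh_pos x).ne'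
  rw [show cosh x * cosh x - sinh x * sinh x = 1 by nlinarith [cosh_sq_sub_sinh_sq x],
    one_div] at hquot
  exact hquot.congr_of_eventuallyEq (.of_eq (funext tanh_eq_sinh_div_cosh))

theorem Real.tanh_eq_exp_two_mul (x : ℝ) : tanh x = (exp (2 * x) - 1) / (exp (2 * x) + 1) := by
  have hexp : exp (2 * x) = exp x * exp x := by rw [← exp_add, two_mul]
  rw [tanh_eq, exp_neg, hexp]
  field_simp

theorem Real.tendsto_tanh_atBot : Tendsto tanh atBot (𝓝 (-1)) := by
  have hexp : Tendsto (fun x : ℝ => exp (2 * x)) atBot (𝓝 0) :=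
    tendsto_exp_atBot.comp (tendsto_id.const_mul_atBot two_pos)
  rw [funext tanh_eq_exp_two_mul, show (-1 : ℝ) = (0 - 1) / (0 + 1) by norm_num]
  exact (hexp.sub_const 1).div (hexp.add_const 1) (by norm_num)

theorem Real.cosh_div_sinh_two_mul {x : ℝ} (hx : x ≠ 0) :
    cosh (2 * x) / sinh (2 * x) = (cosh x / sinh x + tanh x) / 2 := by
  have hs : sinh x ≠ 0 := sinh_ne_zero.mpr hx
  have hc : cosh x ≠ 0 := (cosh_pos x).ne'
  rw [cosh_two_mul, sinh_two_mul, tanh_eq_sinh_div_cosh]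
  field_simp

theorem Real.hasDerivAt_log_sinh_div_const_mul_cosh_pow_three {c x : ℝ} (hc : c ≠ 0)
    (hx : x ≠ 0) :
    HasDerivAt (fun s => log (sinh s / (c * cosh s ^ 3))) (cosh x / sinh x - 3 * tanh x) x := by
  have hs : sinh x ≠ 0 := sinh_ne_zero.mpr hx
  have hcosh : cosh x ≠ 0 := (cosh_pos x).ne'
  have hden : c * cosh x ^ 3 ≠ 0 := by positivity
  have hlog := ((hasDerivAt_sinh x).fun_div (((hasDerivAt_cosh x).fun_pow 3).const_mul c) hden).log
    (div_ne_zero hs hden)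
  convert hlog using 1
  rw [tanh_eq_sinh_div_cosh]
  field_simp
  ring

/-- f(r) = -(1/3)tanh(r) satisfies (f f')'/(f f') = 12 f + 2 coth(2r) for r < 0,
with f(0) = 0, f'(0) = -1/3 and f(r) → 1/3 as r → -∞. -/
theorem stmt10 (f : ℝ → ℝ) (hf : ∀ r, f r = -(1 / 3) * Real.tanh r) :
    (∀ r < (0 : ℝ),
      HasDerivAt (fun s => Real.log (f s * deriv f s))
        (12 * f r + 2 * (Real.cosh (2 * r) / Real.sinh (2 * r))) r) ∧
    f 0 = 0 ∧ deriv f 0 = -(1 / 3) ∧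
    Tendsto f atBot (nhds (1 / 3)) := by
  have hfun : f = fun r => -(1 / 3) * tanh r := funext hf
  have hderiv : deriv f = fun r => -(1 / 3) * (cosh r ^ 2)⁻¹ := by
    rw [hfun]
    exact funext fun r => ((hasDerivAt_tanh r).const_mul _).deriv
  have hprod (s : ℝ) : f s * deriv f s = sinh s / (9 * cosh s ^ 3) := by
    have hc : cosh s ≠ 0 := (cosh_pos s).ne'
    rw [hderiv, hf, tanh_eq_sinh_div_cosh]
    field_simp
    ring
  refine ⟨fun r hr => ?_, by simp [hf], by simp [hderiv], ?_⟩
  · simp only [hprod]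
    rw [hf, cosh_div_sinh_two_mul hr.ne]
    convert hasDerivAt_log_sinh_div_const_mul_cosh_pow_three (by norm_num : (9 : ℝ) ≠ 0) hr.ne
      using 1
    ring
  · rw [hfun]
    convert tendsto_tanh_atBot.const_mul (-(1 / 3) : ℝ) using 2
    norm_num
end

section
/- The functions a(t) = (1/√3)cos(√3 t), b(t) = 1/√3, c(t) = (1/√3)sin(√3 t) satisfy the system ȧ = -(b²+c²-a²)/(2bc), ḃ = -(a²+c²-b²)/(2ac), ċ = -(a²+b²-c²)/(2ab) + 6ab for all t ∈ (0, π/(2√3)). -/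
/-!
Put `θ = √3 t ∈ (0, π/2)` and `r = 1/√3`. Then `(a, b, c) = r (cos θ, 1, sin θ)` are the sides of a
right triangle with hypotenuse `b`, so the three cosine-law quotients on the right-hand sides are the
cosines of its angles, `sin θ`, `0` and `cos θ`. Since `r √3 = 1` and `6 r² = 2`, these match the
derivatives `-sin θ`, `0` and `cos θ` of `a`, `b`, `c`.
-/

open Set Real

theorem hasDerivAt_const_mul_cos_mul (r k t : ℝ) :
    HasDerivAt (fun t => r * cos (k * t)) (-(r * k * sin (k * t))) t :=
  (((hasDerivAt_id t).const_mul k).cos.const_mul r).congr_deriv (by simp only [id]; ring)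

theorem hasDerivAt_const_mul_sin_mul (r k t : ℝ) :
    HasDerivAt (fun t => r * sin (k * t)) (r * k * cos (k * t)) t :=
  (((hasDerivAt_id t).const_mul k).sin.const_mul r).congr_deriv (by simp only [id]; ring)

section RightTriangle

variable {r θ : ℝ}

theorem sq_add_sq_sub_sq_div_eq_sin (hr : r ≠ 0) (hθ : sin θ ≠ 0) :
    (r ^ 2 + (r * sin θ) ^ 2 - (r * cos θ) ^ 2) / (2 * r * (r * sin θ)) = sin θ := by
  rw [div_eq_iff (by positivity)]
  linear_combination -r ^ 2 * cos_sq_add_sin_sq θ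

theorem sq_add_sq_sub_sq_div_eq_cos (hr : r ≠ 0) (hθ : cos θ ≠ 0) :
    ((r * cos θ) ^ 2 + r ^ 2 - (r * sin θ) ^ 2) / (2 * (r * cos θ) * r) = cos θ := by
  rw [div_eq_iff (by positivity)]
  linear_combination -r ^ 2 * cos_sq_add_sin_sq θ

theorem mul_cos_sq_add_mul_sin_sq_sub_sq (r θ : ℝ) :
    (r * cos θ) ^ 2 + (r * sin θ) ^ 2 - r ^ 2 = 0 := by
  linear_combination r ^ 2 * cos_sq_add_sin_sq θ

end RightTriangle

theorem mul_mem_Ioo_half_of_mem_Ioo_div {k x t : ℝ} (hk : 0 < k) (ht : t ∈ Ioo 0 (x / (2 * k))) :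
    k * t ∈ Ioo 0 (x / 2) := by
  refine ⟨mul_pos hk ht.1, ?_⟩
  calc k * t < k * (x / (2 * k)) := mul_lt_mul_of_pos_left ht.2 hk
    _ = x / 2 := by field_simp

/-- a(t) = (1/√3)cos(√3 t), b(t) = 1/√3, c(t) = (1/√3)sin(√3 t) satisfy the KE ODE
system on (0, π/(2√3)). -/
theorem stmt13 (a b c : ℝ → ℝ)
    (ha : ∀ t, a t = (1 / Real.sqrt 3) * Real.cos (Real.sqrt 3 * t))
    (hb : ∀ t, b t = 1 / Real.sqrt 3)
    (hc : ∀ t, c t = (1 / Real.sqrt 3) * Real.sin (Real.sqrt 3 * t)) :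
    ∀ t ∈ Ioo 0 (π / (2 * Real.sqrt 3)),
      HasDerivAt a (-(b t ^ 2 + c t ^ 2 - a t ^ 2) / (2 * b t * c t)) t ∧
      HasDerivAt b (-(a t ^ 2 + c t ^ 2 - b t ^ 2) / (2 * a t * c t)) t ∧
      HasDerivAt c (-(a t ^ 2 + b t ^ 2 - c t ^ 2) / (2 * a t * b t) + 6 * a t * b t) t := by
  intro t ht
  obtain ⟨hθ₀, hθ₁⟩ := mul_mem_Ioo_half_of_mem_Ioo_div (by positivity) ht
  have hsin : sin (√3 * t) ≠ 0 := (sin_pos_of_pos_of_lt_pi hθ₀ (by linarith [pi_pos])).ne'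
  have hcos : cos (√3 * t) ≠ 0 := (cos_pos_of_mem_Ioo ⟨by linarith, hθ₁⟩).ne'
  have hr : 1 / √3 ≠ 0 := by positivity
  have hrk : 1 / √3 * √3 = 1 := by field_simp
  have hr2 : (1 / √3) ^ 2 = 1 / 3 := by rw [div_pow, sq_sqrt (by norm_num)]; norm_num
  obtain rfl : a = _ := funext ha
  obtain rfl : b = _ := funext hb
  obtain rfl : c = _ := funext hc
  refine ⟨?_, ?_, ?_⟩
  · rw [neg_div, sq_add_sq_sub_sq_div_eq_sin hr hsin]
    simpa [hrk] using hasDerivAt_const_mul_cos_mul (1 / √3) √3 t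
  · rw [mul_cos_sq_add_mul_sin_sq_sub_sq, neg_zero, zero_div]
    exact hasDerivAt_const _ _
  · rw [neg_div, sq_add_sq_sub_sq_div_eq_cos hr hcos]
    convert hasDerivAt_const_mul_sin_mul (1 / √3) √3 t using 1
    linear_combination (6 * cos (√3 * t)) * hr2 - cos (√3 * t) * hrk
end

section
/- Suppose a, b, c solve the system ȧ = -(b²+c²-a²)/(2bc), ḃ = -(a²+c²-b²)/(2ac), ċ = -(a²+b²-c²)/(2ab)+6ab on (0, t*), extend continuously differentiably to t*, with a(t*) = 0, b(t*) = c(t*) > 0, and a > 0, b > 0, c > 0 on (0,t*). Then ȧ(t*) = -1 and ḃ(t*) = ċ(t*) = 0. -/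
open Set Filter Topology

/-!
At `t*` the equation for `ȧ` is regular and gives `ȧ(t*) = -1` directly. The equations for
`ḃ` and `ċ` are `0/0` at `t*`: splitting off the quotient `(c - b)/a`, they read
`ḃ = -a/(2c) - (c - b)/a · (c + b)/(2c)` and `ċ = -a/(2b) + (c - b)/a · (c + b)/(2b) + 6ab`.
By l'Hôpital `(c - b)/a → (ċ - ḃ)/ȧ = ḃ - ċ` at `t*`, hence `ḃ(t*) = ċ(t*) - ḃ(t*)`
and `ċ(t*) = ḃ(t*) - ċ(t*)`, which forces `ḃ(t*) = ċ(t*) = 0`.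
-/

lemma neg_sq_add_sq_sub_sq_div_eq (x y z : ℝ) (hx : x ≠ 0) (hz : z ≠ 0) :
    -(x ^ 2 + z ^ 2 - y ^ 2) / (2 * x * z) =
      -(x / (2 * z)) - (z - y) / x * ((z + y) / (2 * z)) := by
  field_simp
  ring

lemma tendsto_neg_sq_add_sq_sub_sq_div {α : Type*} {l : Filter α} {x y z : α → ℝ}
    {β q : ℝ} (hβ : β ≠ 0) (hx : Tendsto x l (𝓝 0)) (hy : Tendsto y l (𝓝 β))
    (hz : Tendsto z l (𝓝 β)) (hq : Tendsto (fun t => (z t - y t) / x t) l (𝓝 q))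
    (hne : ∀ᶠ t in l, x t ≠ 0 ∧ z t ≠ 0) :
    Tendsto (fun t => -(x t ^ 2 + z t ^ 2 - y t ^ 2) / (2 * x t * z t)) l (𝓝 (-q)) := by
  have h2z : Tendsto (fun t => 2 * z t) l (𝓝 (2 * β)) := hz.const_mul 2
  have h2β : 2 * β ≠ 0 := mul_ne_zero two_ne_zero hβ
  have hlim := (hx.div h2z h2β).neg.sub (hq.mul ((hz.add hy).div h2z h2β))
  rw [zero_div, neg_zero, zero_sub, ← two_mul, div_self h2β, mul_one] at hlim
  refine hlim.congr' (hne.mono fun t ht => ?_)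
  exact (neg_sq_add_sq_sub_sq_div_eq _ _ _ ht.1 ht.2).symm

/-- Boundary behaviour at t = t*: if a, b, c solve the KE system on (0,t*), are C¹ up to
t* with a(t*) = 0, b(t*) = c(t*) > 0, and a, b, c > 0 on (0,t*), then
ȧ(t*) = -1 and ḃ(t*) = ċ(t*) = 0. -/
theorem stmt14 (T : ℝ) (hT : 0 < T) (a b c da db dc : ℝ → ℝ)
    (hpos : ∀ t ∈ Ioo 0 T, 0 < a t ∧ 0 < b t ∧ 0 < c t)
    (ha : ∀ t ∈ Ioo 0 T, HasDerivAt a (da t) t)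
    (hb : ∀ t ∈ Ioo 0 T, HasDerivAt b (db t) t)
    (hc : ∀ t ∈ Ioo 0 T, HasDerivAt c (dc t) t)
    (hda : ∀ t ∈ Ioo 0 T, da t = -(b t ^ 2 + c t ^ 2 - a t ^ 2) / (2 * b t * c t))
    (hdb : ∀ t ∈ Ioo 0 T, db t = -(a t ^ 2 + c t ^ 2 - b t ^ 2) / (2 * a t * c t))
    (hdc : ∀ t ∈ Ioo 0 T,
      dc t = -(a t ^ 2 + b t ^ 2 - c t ^ 2) / (2 * a t * b t) + 6 * a t * b t)
    -- C¹ extension to t = T: the functions and their derivatives are continuous from the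
    -- left at T, with one-sided derivatives given by da, db, dc at T:
    (haT : HasDerivWithinAt a (da T) (Iic T) T)
    (hbT : HasDerivWithinAt b (db T) (Iic T) T)
    (hcT : HasDerivWithinAt c (dc T) (Iic T) T)
    (hdaT : Tendsto da (nhdsWithin T (Iio T)) (nhds (da T)))
    (hdbT : Tendsto db (nhdsWithin T (Iio T)) (nhds (db T)))
    (hdcT : Tendsto dc (nhdsWithin T (Iio T)) (nhds (dc T)))
    (haT0 : a T = 0) (hbcT : b T = c T) (hbTpos : 0 < b T) :
    da T = -1 ∧ db T = 0 ∧ dc T = 0 := by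
  have hmem : ∀ᶠ t in 𝓝[<] T, t ∈ Ioo 0 T := Ioo_mem_nhdsLT_of_mem ⟨hT, le_rfl⟩
  have hne : ∀ᶠ t in 𝓝[<] T, a t ≠ 0 ∧ b t ≠ 0 ∧ c t ≠ 0 := hmem.mono fun t ht =>
    let ⟨ha, hb, hc⟩ := hpos t ht; ⟨ha.ne', hb.ne', hc.ne'⟩
  have hca : Tendsto a (𝓝[<] T) (𝓝 0) :=
    haT0 ▸ haT.continuousWithinAt.mono Iio_subset_Iic_self
  have hcb : Tendsto b (𝓝[<] T) (𝓝 (b T)) := hbT.continuousWithinAt.mono Iio_subset_Iic_self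
  have hcc : Tendsto c (𝓝[<] T) (𝓝 (b T)) :=
    hbcT ▸ hcT.continuousWithinAt.mono Iio_subset_Iic_self
  have hda_eq : da T = -1 := by
    have hlim := (((hcb.pow 2).add (hcc.pow 2)).sub (hca.pow 2)).neg.div
      ((hcb.const_mul 2).mul hcc) (by positivity)
    refine (tendsto_nhds_unique_of_eventuallyEq hdaT hlim (hmem.mono hda)).trans ?_
    field_simp
    ring
  have hda_lim : Tendsto da (𝓝[<] T) (𝓝 (-1)) := hda_eq ▸ hdaT
  have hq : Tendsto (fun t => (c t - b t) / a t) (𝓝[<] T) (𝓝 ((dc T - db T) / -1)) :=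
    HasDerivAt.lhopital_zero_nhdsLT (hmem.mono fun t ht => (hc t ht).sub (hb t ht))
      (hmem.mono ha) (hda_lim.eventually_ne (by norm_num))
      (by simpa using hcc.sub hcb) hca (hdcT.sub hdbT |>.div hda_lim (by norm_num))
  have hdb_eq : db T = -((dc T - db T) / -1) :=
    tendsto_nhds_unique_of_eventuallyEq hdbT
      (tendsto_neg_sq_add_sq_sub_sq_div hbTpos.ne' hca hcb hcc hq
        (hne.mono fun _ ht => ⟨ht.1, ht.2.2⟩)) (hmem.mono hdb)
  have hdc_eq : dc T = -(-((dc T - db T) / -1)) + 6 * 0 * b T := by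
    refine tendsto_nhds_unique_of_eventuallyEq hdcT ?_ (hmem.mono hdc)
    refine (tendsto_neg_sq_add_sq_sub_sq_div hbTpos.ne' hca hcc hcb ?_
      (hne.mono fun _ ht => ⟨ht.1, ht.2.1⟩)).add ((hca.const_mul 6).mul hcb)
    exact hq.neg.congr fun t => by rw [← neg_div, neg_sub]
  exact ⟨hda_eq, by linarith, by linarith⟩
end

section
/- If a, b, c satisfy the system ȧ = -(b²+c²-a²)/(2bc), ḃ = -(a²+c²-b²)/(2ac), ċ = -(a²+b²-c²)/(2ab)+6ab with a = b = α > 0 (constant value at a boundary point) and ċ = 2β at a point where c = 0 (interpreted as the limit), and the limit of ċ as t → 0⁺ with a(t),b(t) → α, c(t)/t → 2β exists, then α² = (1 + 2β)/6. More concretely: if a(t) = α + O(t), b(t) = α + O(t), c(t) = 2βt + O(t²) solve the system near t = 0 with the third equation holding in the limit t → 0⁺, then α² = (1+2β)/6. -/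
open Set Filter Topology

/-!
Along the solution, `ċ = -(a² + b² - c²)/(2ab) + 6ab`, and the right-hand side is continuous
wherever `ab ≠ 0`. As `t → 0⁺` it therefore tends to its value at `(α, α, 0)`, namely `6α² - 1`
(note `c → 0` because `c/t` converges), while `ċ → 2β` by assumption.
-/

noncomputable def cDotRhs (a b c : ℝ) : ℝ :=
  -(a ^ 2 + b ^ 2 - c ^ 2) / (2 * a * b) + 6 * a * b

lemma cDotRhs_self_self_zero {α : ℝ} (hα : α ≠ 0) : cDotRhs α α 0 = 6 * α ^ 2 - 1 := by
  unfold cDotRhs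
  field_simp
  ring

lemma Filter.Tendsto.cDotRhs {ι : Type*} {l : Filter ι} {a b c : ι → ℝ} {a₀ b₀ c₀ : ℝ}
    (ha : Tendsto a l (𝓝 a₀)) (hb : Tendsto b l (𝓝 b₀)) (hc : Tendsto c l (𝓝 c₀))
    (ha₀ : a₀ ≠ 0) (hb₀ : b₀ ≠ 0) :
    Tendsto (fun t => cDotRhs (a t) (b t) (c t)) l (𝓝 (cDotRhs a₀ b₀ c₀)) := by
  have hden : 2 * a₀ * b₀ ≠ 0 := by simp [ha₀, hb₀]
  exact ((((ha.pow 2).add (hb.pow 2)).sub (hc.pow 2)).neg.div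
    ((tendsto_const_nhds.mul ha).mul hb) hden).add ((tendsto_const_nhds.mul ha).mul hb)

lemma tendsto_zero_of_tendsto_div_self {f : ℝ → ℝ} {s : Set ℝ} {L : ℝ} (hs : (0 : ℝ) ∉ s)
    (h : Tendsto (fun t => f t / t) (𝓝[s] 0) (𝓝 L)) : Tendsto f (𝓝[s] 0) (𝓝 0) := by
  have hprod : Tendsto (fun t => f t / t * t) (𝓝[s] 0) (𝓝 (L * 0)) :=
    h.mul (tendsto_id.mono_left nhdsWithin_le_nhds)
  rw [mul_zero] at hprod
  refine hprod.congr' ?_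
  filter_upwards [self_mem_nhdsWithin] with t ht
  exact div_mul_cancel₀ (f t) (ne_of_mem_of_not_mem ht hs)

theorem stmt15_general (α β ε : ℝ) (hα : 0 < α) (hε : 0 < ε)
    (a b c dc : ℝ → ℝ)
    (hdc : ∀ t ∈ Ioo 0 ε,
      dc t = -(a t ^ 2 + b t ^ 2 - c t ^ 2) / (2 * a t * b t) + 6 * a t * b t)
    (haLim : Tendsto a (nhdsWithin 0 (Ioi 0)) (nhds α))
    (hbLim : Tendsto b (nhdsWithin 0 (Ioi 0)) (nhds α))
    (hcLim : Tendsto (fun t => c t / t) (nhdsWithin 0 (Ioi 0)) (nhds (2 * β)))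
    (hdcLim : Tendsto dc (nhdsWithin 0 (Ioi 0)) (nhds (2 * β))) :
    α ^ 2 = (1 + 2 * β) / 6 := by
  have hc0 : Tendsto c (𝓝[>] 0) (𝓝 0) :=
    tendsto_zero_of_tendsto_div_self (by simp) hcLim
  have hdc_eq : dc =ᶠ[𝓝[>] 0] fun t => cDotRhs (a t) (b t) (c t) := by
    filter_upwards [Ioo_mem_nhdsGT hε] with t ht
    exact hdc t ht
  have hrhs := haLim.cDotRhs hbLim hc0 hα.ne' hα.ne'
  have hβα : 2 * β = 6 * α ^ 2 - 1 := by
    rw [← cDotRhs_self_self_zero hα.ne']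
    exact tendsto_nhds_unique (hdcLim.congr' hdc_eq) hrhs
  linarith

/-- Boundary behaviour at t = 0: if a(t) → α, b(t) → α, c(t)/t → 2β and ċ(t) → 2β as
t → 0⁺, for a positive solution (a,b,c) of the KE system on (0,ε), then
α² = (1 + 2β)/6. -/
theorem stmt15 (α β ε : ℝ) (hα : 0 < α) (hβ : 0 < β) (hε : 0 < ε)
    (a b c da db dc : ℝ → ℝ)
    (hpos : ∀ t ∈ Ioo 0 ε, 0 < a t ∧ 0 < b t ∧ 0 < c t)
    (ha : ∀ t ∈ Ioo 0 ε, HasDerivAt a (da t) t)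
    (hb : ∀ t ∈ Ioo 0 ε, HasDerivAt b (db t) t)
    (hc : ∀ t ∈ Ioo 0 ε, HasDerivAt c (dc t) t)
    (hda : ∀ t ∈ Ioo 0 ε, da t = -(b t ^ 2 + c t ^ 2 - a t ^ 2) / (2 * b t * c t))
    (hdb : ∀ t ∈ Ioo 0 ε, db t = -(a t ^ 2 + c t ^ 2 - b t ^ 2) / (2 * a t * c t))
    (hdc : ∀ t ∈ Ioo 0 ε,
      dc t = -(a t ^ 2 + b t ^ 2 - c t ^ 2) / (2 * a t * b t) + 6 * a t * b t)
    (haLim : Tendsto a (nhdsWithin 0 (Ioi 0)) (nhds α))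
    (hbLim : Tendsto b (nhdsWithin 0 (Ioi 0)) (nhds α))
    (hcLim : Tendsto (fun t => c t / t) (nhdsWithin 0 (Ioi 0)) (nhds (2 * β)))
    (hdcLim : Tendsto dc (nhdsWithin 0 (Ioi 0)) (nhds (2 * β))) :
    α ^ 2 = (1 + 2 * β) / 6 :=
  stmt15_general α β ε hα hε a b c dc hdc haLim hbLim hcLim hdcLim
end
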